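/- arXiv:1604.00303 — 4 statements merged into one kernel-verified Lean document; each statement's English description precedes it below -/
import Mathlib

section
/- For every integer d ≥ 3, the function f(ρ) = 2 arctan(ρ/√(d−2)) satisfies the self-similar co-rotational wave map equation (1−ρ²)f''(ρ) + ((d−1)/ρ − 2ρ)f'(ρ) − (d−1)·sin(f(ρ))·cos(f(ρ))/ρ² = 0 for all ρ ∈ (0,1). -/
/-!
With `c = √(d - 2)`, the profile `f(ρ) = 2 arctan(ρ/c)` has `f' = 2c/(c² + ρ²)`, and the
double-angle formulas make `sin f` and `cos f` rational in `ρ` as well. The equation then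
becomes an identity between rational functions of `ρ` and `c`, once `d - 1` is written as
`c² + 1`.
-/

/-- The Bizoń–Biernat profile `f(ρ) = 2 arctan(ρ/√(d-2))`. -/
noncomputable def BBprofile (d : ℕ) : ℝ → ℝ :=
  fun ρ => 2 * Real.arctan (ρ / Real.sqrt ((d : ℝ) - 2))

open Real

theorem Real.sin_two_mul_arctan (t : ℝ) : sin (2 * arctan t) = 2 * t / (1 + t ^ 2) := by
  have hsin : sin (arctan t) = t * cos (arctan t) := by
    rw [sin_arctan, cos_arctan, mul_one_div]
  rw [sin_two_mul, hsin, mul_assoc, mul_assoc, ← sq, cos_sq_arctan, mul_one_div, mul_div_assoc]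

theorem Real.cos_two_mul_arctan (t : ℝ) : cos (2 * arctan t) = (1 - t ^ 2) / (1 + t ^ 2) := by
  rw [cos_two_mul, cos_sq_arctan]
  field_simp
  ring

theorem hasDerivAt_two_mul_arctan_div {c : ℝ} (hc : c ≠ 0) (x : ℝ) :
    HasDerivAt (fun x => 2 * arctan (x / c)) (2 * c / (c ^ 2 + x ^ 2)) x :=
  (((hasDerivAt_id' x).div_const c).arctan.const_mul 2).congr_deriv (by field_simp)

theorem hasDerivAt_mul_div_sq_add_sq {c : ℝ} (hc : c ≠ 0) (x : ℝ) :
    HasDerivAt (fun x => 2 * c / (c ^ 2 + x ^ 2)) (-(4 * c * x) / (c ^ 2 + x ^ 2) ^ 2) x :=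
  ((hasDerivAt_const x (2 * c)).div ((hasDerivAt_pow 2 x).const_add (c ^ 2))
    (by positivity)).congr_deriv (by simp; ring)

/-- Here `n` plays the role of `d - 1`. -/
noncomputable def selfSimilarWaveMapOperator (n : ℝ) (f : ℝ → ℝ) (ρ : ℝ) : ℝ :=
  (1 - ρ ^ 2) * deriv (deriv f) ρ + (n / ρ - 2 * ρ) * deriv f ρ
    - n * sin (f ρ) * cos (f ρ) / ρ ^ 2

theorem selfSimilarWaveMapOperator_two_mul_arctan_div {c ρ : ℝ} (hc : c ≠ 0) (hρ : ρ ≠ 0) :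
    selfSimilarWaveMapOperator (c ^ 2 + 1) (fun x => 2 * arctan (x / c)) ρ = 0 := by
  have hderiv : deriv (fun x => 2 * arctan (x / c)) = fun x => 2 * c / (c ^ 2 + x ^ 2) :=
    funext fun x => (hasDerivAt_two_mul_arctan_div hc x).deriv
  simp only [selfSimilarWaveMapOperator, hderiv, (hasDerivAt_mul_div_sq_add_sq hc ρ).deriv,
    sin_two_mul_arctan, cos_two_mul_arctan]
  field_simp
  ring

/-- For every `d ≥ 3`, the Bizoń–Biernat profile solves the self-similar
co-rotational wave map ODE on `(0,1)`. -/
theorem BBprofile_solves_selfsimilar_ODE (d : ℕ) (hd : 3 ≤ d) :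
    ∀ ρ ∈ Set.Ioo (0 : ℝ) 1,
      (1 - ρ ^ 2) * deriv (deriv (BBprofile d)) ρ
        + (((d : ℝ) - 1) / ρ - 2 * ρ) * deriv (BBprofile d) ρ
        - ((d : ℝ) - 1) * Real.sin (BBprofile d ρ) * Real.cos (BBprofile d ρ) / ρ ^ 2 = 0 := by
  intro ρ hρ
  have hd2 : (0 : ℝ) < d - 2 := by
    have : (3 : ℝ) ≤ d := by exact_mod_cast hd
    linarith
  have hn : √((d : ℝ) - 2) ^ 2 + 1 = d - 1 := by
    rw [sq_sqrt hd2.le]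
    ring
  have h := selfSimilarWaveMapOperator_two_mul_arctan_div (sqrt_pos.mpr hd2).ne' hρ.1.ne'
  rwa [hn] at h
end

section
/- Let d ≥ 3 be an integer, m = (d−1)/2, f(ρ) = 2 arctan(ρ/√(d−2)), v₁(ρ) = ρ^{m+1}(1−ρ²)^{1−m/2} f'(ρ), w(ρ) = v₁'(ρ)/v₁(ρ), and W(ρ) = (1−ρ²)(w(ρ)² − w'(ρ)) + 4ρ·w(ρ). Then for all ρ ∈ (0,1): W(ρ) + m(ρ² − m + 1)/(ρ²(1−ρ²)) − 2 = −(2(d−2)/ρ²)·(ρ² − d)/(ρ² + d − 2). -/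
/-- `m = (d-1)/2`. -/
noncomputable def mm (d : ℕ) : ℝ := ((d : ℝ) - 1) / 2

/-- The transformed symmetry mode `v₁(ρ) = ρ^(m+1) (1-ρ²)^(1-m/2) f'(ρ)`. -/
noncomputable def v1 (d : ℕ) : ℝ → ℝ :=
  fun ρ => ρ ^ (mm d + 1) * (1 - ρ ^ 2) ^ (1 - mm d / 2) * deriv (BBprofile d) ρ

/-- `w = v₁'/v₁`. -/
noncomputable def ww (d : ℕ) : ℝ → ℝ :=
  fun ρ => deriv (v1 d) ρ / v1 d ρ

/-- `W(ρ) = (1-ρ²)(w² - w') + 4ρw`. -/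
noncomputable def WW (d : ℕ) : ℝ → ℝ :=
  fun ρ => (1 - ρ ^ 2) * ((ww d ρ) ^ 2 - deriv (ww d) ρ) + 4 * ρ * ww d ρ

/-
On `(0, 1)` the mode `v₁ = ρ^(m+1) (1-ρ²)^(1-m/2) · 2√b/(b+ρ²)`, `b = d-2`, does not vanish, so
`w = v₁'/v₁` is its logarithmic derivative, the rational function
`(m+1)/ρ + (m-2)ρ/(1-ρ²) - 2ρ/(b+ρ²)`. Then `W` is rational as well, and with `d = 2m+1`,
`b = 2m-1` the left-hand side collapses to the stated formula.
-/

open Set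

lemma cast_sub_two_pos {d : ℕ} (hd : 3 ≤ d) : (0 : ℝ) < d - 2 := by
  have : (3 : ℝ) ≤ d := by exact_mod_cast hd
  linarith

lemma one_sub_sq_pos_of_mem_Ioo {x : ℝ} (hx : x ∈ Ioo 0 1) : 0 < 1 - x ^ 2 := by
  nlinarith [hx.1, hx.2]

lemma hasDerivAt_two_mul_arctan_div_sqrt {b : ℝ} (hb : 0 < b) (x : ℝ) :
    HasDerivAt (fun x => 2 * Real.arctan (x / √b)) (2 * √b / (b + x ^ 2)) x := by
  have hinner : HasDerivAt (fun x : ℝ => x / √b) (1 / √b) x := by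
    simpa using (hasDerivAt_id x).div_const √b
  refine (((Real.hasDerivAt_arctan _).comp x hinner).const_mul 2).congr_deriv ?_
  field_simp
  rw [Real.sq_sqrt hb.le]

lemma deriv_BBprofile {d : ℕ} (hd : 3 ≤ d) :
    deriv (BBprofile d) = fun x => 2 * √((d : ℝ) - 2) / ((d - 2) + x ^ 2) := by
  funext x
  exact (hasDerivAt_two_mul_arctan_div_sqrt (cast_sub_two_pos hd) x).deriv

/-- The logarithmic derivative of `x ^ a * (1 - x ^ 2) ^ c * (k / (b + x ^ 2))`. -/
noncomputable def modeLogDeriv (a c b : ℝ) (x : ℝ) : ℝ :=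
  a / x - 2 * c * x / (1 - x ^ 2) - 2 * x / (b + x ^ 2)

lemma hasDerivAt_rpow_mul_one_sub_sq_rpow_mul_div (a c b k : ℝ) {x : ℝ} (hx : x ∈ Ioo 0 1)
    (hb : b + x ^ 2 ≠ 0) :
    HasDerivAt (fun x => x ^ a * (1 - x ^ 2) ^ c * (k / (b + x ^ 2)))
      (x ^ a * (1 - x ^ 2) ^ c * (k / (b + x ^ 2)) * modeLogDeriv a c b x) x := by
  have hx0 := hx.1
  have hq := one_sub_sq_pos_of_mem_Ioo hx
  have hA : HasDerivAt (fun x : ℝ => x ^ a) (a * x ^ (a - 1)) x :=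
    Real.hasDerivAt_rpow_const (Or.inl hx0.ne')
  have hB : HasDerivAt (fun x : ℝ => (1 - x ^ 2) ^ c)
      (c * (1 - x ^ 2) ^ (c - 1) * (-(2 * x))) x := by
    have hq' : HasDerivAt (fun x : ℝ => 1 - x ^ 2) (-(2 * x)) x := by
      simpa using (hasDerivAt_pow 2 x).const_sub 1
    exact (Real.hasDerivAt_rpow_const (Or.inl hq.ne')).comp x hq'
  have hC : HasDerivAt (fun x : ℝ => k / (b + x ^ 2)) (-(k * (2 * x)) / (b + x ^ 2) ^ 2) x := by
    have hden : HasDerivAt (fun x : ℝ => b + x ^ 2) (2 * x) x := by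
      simpa using (hasDerivAt_pow 2 x).const_add b
    exact ((hasDerivAt_const x k).fun_div hden hb).congr_deriv (by ring)
  refine ((hA.fun_mul hB).fun_mul hC).congr_deriv ?_
  rw [modeLogDeriv, Real.rpow_sub hx0, Real.rpow_sub hq, Real.rpow_one, Real.rpow_one]
  field_simp
  ring

lemma hasDerivAt_modeLogDeriv (a c b : ℝ) {x : ℝ} (hx : x ≠ 0) (hq : 1 - x ^ 2 ≠ 0)
    (hb : b + x ^ 2 ≠ 0) :
    HasDerivAt (modeLogDeriv a c b)
      (-a / x ^ 2 - 2 * c * (1 + x ^ 2) / (1 - x ^ 2) ^ 2 - 2 * (b - x ^ 2) / (b + x ^ 2) ^ 2) x := by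
  have hq' : HasDerivAt (fun x : ℝ => 1 - x ^ 2) (-(2 * x)) x := by
    simpa using (hasDerivAt_pow 2 x).const_sub 1
  have hb' : HasDerivAt (fun x : ℝ => b + x ^ 2) (2 * x) x := by
    simpa using (hasDerivAt_pow 2 x).const_add b
  have h := (((hasDerivAt_const x a).fun_div (hasDerivAt_id' x) hx).fun_sub
    (((hasDerivAt_id' x).const_mul (2 * c)).fun_div hq' hq)).fun_sub
    (((hasDerivAt_id' x).const_mul 2).fun_div hb' hb)
  refine h.congr_deriv ?_
  field_simp
  ring

section

variable {d : ℕ}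

lemma v1_eq (hd : 3 ≤ d) :
    v1 d = fun x => x ^ (mm d + 1) * (1 - x ^ 2) ^ (1 - mm d / 2)
      * (2 * √((d : ℝ) - 2) / ((d - 2) + x ^ 2)) := by
  unfold v1
  rw [deriv_BBprofile hd]

lemma ww_eqOn (hd : 3 ≤ d) :
    EqOn (ww d) (modeLogDeriv (mm d + 1) (1 - mm d / 2) (d - 2)) (Ioo 0 1) := by
  intro x hx
  have hb := cast_sub_two_pos hd
  have hv : HasDerivAt (v1 d) (v1 d x * modeLogDeriv (mm d + 1) (1 - mm d / 2) (d - 2) x) x := by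
    rw [v1_eq hd]
    exact hasDerivAt_rpow_mul_one_sub_sq_rpow_mul_div _ _ _ _ hx (by positivity)
  have hpos : 0 < v1 d x := by
    have hx0 := hx.1
    have hq := one_sub_sq_pos_of_mem_Ioo hx
    rw [v1_eq hd]
    positivity
  rw [ww, hv.deriv, mul_div_cancel_left₀ _ hpos.ne']

end

/-- Explicit formula for the supersymmetric potential of the Bizoń–Biernat solution. -/
theorem susy_potential_formula (d : ℕ) (hd : 3 ≤ d) :
    ∀ ρ ∈ Set.Ioo (0 : ℝ) 1,
      WW d ρ + mm d * (ρ ^ 2 - mm d + 1) / (ρ ^ 2 * (1 - ρ ^ 2)) - 2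
        = -(2 * ((d : ℝ) - 2) / ρ ^ 2) * ((ρ ^ 2 - (d : ℝ)) / (ρ ^ 2 + (d : ℝ) - 2)) := by
  intro ρ hρ
  have hb := cast_sub_two_pos hd
  have hq := one_sub_sq_pos_of_mem_Ioo hρ
  have hw' : deriv (ww d) ρ = deriv (modeLogDeriv (mm d + 1) (1 - mm d / 2) (d - 2)) ρ :=
    ((ww_eqOn hd).eventuallyEq_of_mem (isOpen_Ioo.mem_nhds hρ)).deriv_eq
  rw [WW, ww_eqOn hd hρ, hw', (hasDerivAt_modeLogDeriv _ _ _ hρ.1.ne' hq.ne' (by positivity)).deriv,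
    modeLogDeriv, mm]
  have hρ0 : ρ ≠ 0 := hρ.1.ne'
  have hden : ρ ^ 2 + (d : ℝ) - 2 ≠ 0 := by nlinarith
  field_simp
  ring
end

section
/- Let k ≥ 2 be an integer and λ ∈ ℂ. A twice continuously differentiable function y : (0,1) → ℂ satisfies the Heun equation y''(x) + (1/2)((k+6)/x + (2λ−k+1)/(x−1))y'(x) + (1/4)·((λ+3)(λ+2)x + (kλ² + 5kλ + 2k − 4))/(x(x−1)(x+k))·y(x) = 0 on (0,1) if and only if the function ũ(ρ) = ρ²·y(ρ²) satisfies (1−ρ²)ũ'' + ((k+1)/ρ − 2(λ+1)ρ)ũ' − λ(λ+1)ũ + (2k/ρ²)·((ρ²−k−2)/(ρ²+k))·ũ = 0 on (0,1). -/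
/-!
By the chain rule, at `x = ρ²` the function `ũ(ρ) = ρ² y(ρ²)` has `ũ' = 2ρ y + 2ρ³ y'` and
`ũ'' = 2y + 10ρ² y' + 4ρ⁴ y''`. Substituting these, the supersymmetric expression at `ρ` is
`-4ρ⁴(ρ² - 1)` times the Heun expression at `x = ρ²`. That factor does not vanish on `(0,1)`,
and `ρ ↦ ρ²` maps `(0,1)` onto itself, so the two equations hold together.
-/

open Set Filter Topology

lemma HasDerivAt.comp_sq {E : Type*} [NormedAddCommGroup E] [NormedSpace ℝ E] {f : ℝ → E}
    {f' : E} {t : ℝ} (hf : HasDerivAt f f' (t ^ 2)) :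
    HasDerivAt (fun s => f (s ^ 2)) ((2 * t) • f') t :=
  hf.scomp (h := fun s => s ^ 2) t (by simpa using hasDerivAt_pow 2 t)

lemma hasDerivAt_ofReal_pow (n : ℕ) (t : ℝ) :
    HasDerivAt (fun s : ℝ => (s : ℂ) ^ n) (n * (t : ℂ) ^ (n - 1)) t :=
  (hasDerivAt_pow n (t : ℂ)).comp_ofReal

lemma hasDerivAt_sq_mul_comp_sq {y : ℝ → ℂ} {y' : ℂ} {t : ℝ} (hy : HasDerivAt y y' (t ^ 2)) :
    HasDerivAt (fun s : ℝ => (s : ℂ) ^ 2 * y (s ^ 2))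
      (2 * t * y (t ^ 2) + 2 * t ^ 3 * y') t := by
  refine ((hasDerivAt_ofReal_pow 2 t).fun_mul hy.comp_sq).congr_deriv ?_
  rw [Complex.real_smul]
  push_cast
  ring

lemma deriv_deriv_sq_mul_comp_sq {U : Set ℝ} (hU : IsOpen U) {y : ℝ → ℂ}
    (hy : ∀ t ∈ U, DifferentiableAt ℝ y (t ^ 2)) {ρ : ℝ} (hρ : ρ ∈ U)
    (hy' : DifferentiableAt ℝ (deriv y) (ρ ^ 2)) :
    deriv (deriv (fun t : ℝ => (t : ℂ) ^ 2 * y (t ^ 2))) ρ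
      = 2 * y (ρ ^ 2) + 10 * ρ ^ 2 * deriv y (ρ ^ 2) + 4 * ρ ^ 4 * deriv (deriv y) (ρ ^ 2) := by
  have hu : deriv (fun t : ℝ => (t : ℂ) ^ 2 * y (t ^ 2))
      =ᶠ[𝓝 ρ] fun t => 2 * t * y (t ^ 2) + 2 * t ^ 3 * deriv y (t ^ 2) :=
    eventually_of_mem (hU.mem_nhds hρ) fun t ht =>
      (hasDerivAt_sq_mul_comp_sq (hy t ht).hasDerivAt).deriv
  rw [hu.deriv_eq]
  have h1 := (hasDerivAt_ofReal_pow 1 ρ).const_mul (2 : ℂ)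
  have h3 := (hasDerivAt_ofReal_pow 3 ρ).const_mul (2 : ℂ)
  simp only [pow_one] at h1
  refine (((h1.fun_mul (hy ρ hρ).hasDerivAt.comp_sq).fun_add
    (h3.fun_mul hy'.hasDerivAt.comp_sq)).congr_deriv ?_).deriv
  rw [Complex.real_smul, Complex.real_smul]
  push_cast
  ring

lemma sq_mem_Ioo_zero_one {ρ : ℝ} (hρ : ρ ∈ Ioo (0 : ℝ) 1) : ρ ^ 2 ∈ Ioo (0 : ℝ) 1 :=
  ⟨pow_pos hρ.1 2, pow_lt_one₀ hρ.1.le hρ.2 two_ne_zero⟩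

lemma forall_mem_Ioo_zero_one_iff_sq {P : ℝ → Prop} :
    (∀ x ∈ Ioo (0 : ℝ) 1, P x) ↔ ∀ ρ ∈ Ioo (0 : ℝ) 1, P (ρ ^ 2) := by
  refine ⟨fun h ρ hρ => h _ (sq_mem_Ioo_zero_one hρ), fun h x hx => ?_⟩
  have := h √x ⟨Real.sqrt_pos.2 hx.1, (Real.sqrt_lt' one_pos).2 (by simpa using hx.2)⟩
  rwa [Real.sq_sqrt hx.1.le] at this

lemma susy_eq_mul_heun (k lam r Y Y1 Y2 : ℂ) (hr : r ≠ 0) (hr1 : r ^ 2 - 1 ≠ 0)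
    (hrk : r ^ 2 + k ≠ 0) :
    (1 - r ^ 2) * (2 * Y + 10 * r ^ 2 * Y1 + 4 * r ^ 4 * Y2)
      + ((k + 1) / r - 2 * (lam + 1) * r) * (2 * r * Y + 2 * r ^ 3 * Y1)
      - lam * (lam + 1) * (r ^ 2 * Y)
      + (2 * k / r ^ 2) * ((r ^ 2 - k - 2) / (r ^ 2 + k)) * (r ^ 2 * Y)
    = (-4 * r ^ 4 * (r ^ 2 - 1)) *
      (Y2 + (1 / 2) * ((k + 6) / r ^ 2 + (2 * lam - k + 1) / (r ^ 2 - 1)) * Y1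
        + (1 / 4) * (((lam + 3) * (lam + 2) * r ^ 2
              + (k * lam ^ 2 + 5 * k * lam + 2 * k - 4))
            / (r ^ 2 * (r ^ 2 - 1) * (r ^ 2 + k))) * Y) := by
  field_simp
  ring

theorem heun_susy_equivalence_general (k : ℕ) (lam : ℂ)
    (y : ℝ → ℂ) (hy : ContDiffOn ℝ 2 y (Set.Ioo 0 1)) :
    (∀ x ∈ Set.Ioo (0 : ℝ) 1,
      deriv (deriv y) x
        + (1 / 2) * (((k : ℂ) + 6) / (x : ℂ) + (2 * lam - (k : ℂ) + 1) / ((x : ℂ) - 1))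
            * deriv y x
        + (1 / 4) * (((lam + 3) * (lam + 2) * (x : ℂ)
              + ((k : ℂ) * lam ^ 2 + 5 * (k : ℂ) * lam + 2 * (k : ℂ) - 4))
            / ((x : ℂ) * ((x : ℂ) - 1) * ((x : ℂ) + (k : ℂ)))) * y x = 0)
    ↔
    (∀ ρ ∈ Set.Ioo (0 : ℝ) 1,
      (1 - (ρ : ℂ) ^ 2) * deriv (deriv (fun t : ℝ => (t : ℂ) ^ 2 * y (t ^ 2))) ρ
        + (((k : ℂ) + 1) / (ρ : ℂ) - 2 * (lam + 1) * (ρ : ℂ))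
            * deriv (fun t : ℝ => (t : ℂ) ^ 2 * y (t ^ 2)) ρ
        - lam * (lam + 1) * ((ρ : ℂ) ^ 2 * y (ρ ^ 2))
        + (2 * (k : ℂ) / (ρ : ℂ) ^ 2) * (((ρ : ℂ) ^ 2 - (k : ℂ) - 2) / ((ρ : ℂ) ^ 2 + (k : ℂ)))
            * ((ρ : ℂ) ^ 2 * y (ρ ^ 2)) = 0) := by
  have hy1 : ∀ x ∈ Ioo (0 : ℝ) 1, DifferentiableAt ℝ y x := fun x hx =>
    (hy.differentiableOn two_ne_zero).differentiableAt (isOpen_Ioo.mem_nhds hx)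
  have hy2 : ∀ x ∈ Ioo (0 : ℝ) 1, DifferentiableAt ℝ (deriv y) x := fun x hx =>
    ((hy.deriv_of_isOpen isOpen_Ioo le_rfl).differentiableOn
      one_ne_zero).differentiableAt (isOpen_Ioo.mem_nhds hx)
  refine forall_mem_Ioo_zero_one_iff_sq.trans (forall₂_congr fun ρ hρ => ?_)
  have hρ2 := sq_mem_Ioo_zero_one hρ
  have hr : (ρ : ℂ) ≠ 0 := Complex.ofReal_ne_zero.2 hρ.1.ne'
  have hr1 : (ρ : ℂ) ^ 2 - 1 ≠ 0 := by exact_mod_cast (sub_neg.2 hρ2.2).ne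
  have hrk : (ρ : ℂ) ^ 2 + k ≠ 0 := by
    exact_mod_cast (add_pos_of_pos_of_nonneg hρ2.1 k.cast_nonneg).ne'
  rw [deriv_deriv_sq_mul_comp_sq isOpen_Ioo (fun t ht => hy1 _ (sq_mem_Ioo_zero_one ht)) hρ
      (hy2 _ hρ2), (hasDerivAt_sq_mul_comp_sq (hy1 _ hρ2).hasDerivAt).deriv,
    susy_eq_mul_heun _ _ _ _ _ _ hr hr1 hrk, mul_eq_zero,
    or_iff_right (by simp [hr, hr1]), Complex.ofReal_pow]

/-- Equivalence between the Heun equation in canonical form and the supersymmetric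
problem under the substitution `x = ρ²`, `ũ(ρ) = ρ² y(ρ²)`. -/
theorem heun_susy_equivalence (k : ℕ) (hk : 2 ≤ k) (lam : ℂ)
    (y : ℝ → ℂ) (hy : ContDiffOn ℝ 2 y (Set.Ioo 0 1)) :
    (∀ x ∈ Set.Ioo (0 : ℝ) 1,
      deriv (deriv y) x
        + (1 / 2) * (((k : ℂ) + 6) / (x : ℂ) + (2 * lam - (k : ℂ) + 1) / ((x : ℂ) - 1))
            * deriv y x
        + (1 / 4) * (((lam + 3) * (lam + 2) * (x : ℂ)
              + ((k : ℂ) * lam ^ 2 + 5 * (k : ℂ) * lam + 2 * (k : ℂ) - 4))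
            / ((x : ℂ) * ((x : ℂ) - 1) * ((x : ℂ) + (k : ℂ)))) * y x = 0)
    ↔
    (∀ ρ ∈ Set.Ioo (0 : ℝ) 1,
      (1 - (ρ : ℂ) ^ 2) * deriv (deriv (fun t : ℝ => (t : ℂ) ^ 2 * y (t ^ 2))) ρ
        + (((k : ℂ) + 1) / (ρ : ℂ) - 2 * (lam + 1) * (ρ : ℂ))
            * deriv (fun t : ℝ => (t : ℂ) ^ 2 * y (t ^ 2)) ρ
        - lam * (lam + 1) * ((ρ : ℂ) ^ 2 * y (ρ ^ 2))
        + (2 * (k : ℂ) / (ρ : ℂ) ^ 2) * (((ρ : ℂ) ^ 2 - (k : ℂ) - 2) / ((ρ : ℂ) ^ 2 + (k : ℂ)))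
            * ((ρ : ℂ) ^ 2 * y (ρ ^ 2)) = 0) :=
  heun_susy_equivalence_general k lam y hy
end

section
/- For every integer k ≥ 3, the quartic polynomial P(λ) = k²λ⁴ + 14k²λ³ + k(63k − 8)λ² + 14k(7k − 4)λ + 8(5k² − 2k + 8) is Hurwitz-stable: it has no complex root λ with Re λ ≥ 0. -/
/-!
With `μ = λ(λ + 7)` the quartic is the quadratic `k²μ² + k(14k - 8)μ + 8(5k² - 2k + 8)`.
The map `λ ↦ λ(λ + 7)` sends the closed right half-plane outside the parabola
`49 Re μ + (Im μ)² < 0`, the image of the imaginary axis, while both roots of the quadratic lie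
strictly inside it: a real root is negative, and a non-real root has `Re μ = -(7k - 4)/k`
and too small an imaginary part.
-/

namespace Complex

lemma sq_mul_re_add_im_sq_nonneg_of_re_nonneg {a : ℝ} (ha : 0 ≤ a) {z : ℂ} (hz : 0 ≤ z.re) :
    0 ≤ a ^ 2 * (z * (z + a)).re + (z * (z + a)).im ^ 2 := by
  simp only [mul_re, mul_im, add_re, add_im, ofReal_re, ofReal_im, add_zero]
  nlinarith [mul_nonneg hz ha, mul_nonneg (mul_nonneg hz hz) (sq_nonneg z.im),
    mul_nonneg (mul_nonneg hz ha) (sq_nonneg z.im), mul_nonneg hz hz]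

end Complex

open Complex in
lemma quadratic_ne_zero_of_sq_mul_re_add_im_sq_nonneg {k : ℝ} (hk : 1 ≤ k) {w : ℂ}
    (hw : 0 ≤ 7 ^ 2 * w.re + w.im ^ 2) :
    (k : ℂ) ^ 2 * w ^ 2 + k * (14 * k - 8) * w + 8 * (5 * k ^ 2 - 2 * k + 8) ≠ 0 := by
  intro h
  have hre := congrArg re h
  have him := congrArg im h
  simp only [pow_two, add_re, mul_re, ofReal_re, ofReal_im, mul_zero, sub_zero, mul_im, zero_mul,
    add_zero, sub_re, re_ofNat, im_ofNat, sub_im, sub_self, add_im, zero_re, zero_im] at hre him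
  set u := w.re
  set v := w.im
  have hk0 : 0 < k := by linarith
  have him' : v * (k * (2 * k * u + 14 * k - 8)) = 0 := by linear_combination him
  rcases mul_eq_zero.mp him' with hv | hlin
  · rw [hv] at hre hw
    have hu : 0 ≤ u := by linarith
    nlinarith [mul_nonneg (mul_nonneg hk0.le (by linarith : (0:ℝ) ≤ 14 * k - 8)) hu]
  · have hku : k * u = -(7 * k - 4) := by
      have := (mul_eq_zero.mp hlin).resolve_left hk0.ne'
      linarith
    have hkv : k ^ 2 * v ^ 2 = -9 * k ^ 2 + 40 * k + 48 := by
      linear_combination (-1) * hre + (k * u + 7 * k - 4) * hku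
    have : 0 ≤ -352 * k ^ 2 + 236 * k + 48 := by
      linear_combination (k ^ 2) * hw + 49 * k * hku + hkv
    nlinarith

/-- Hurwitz stability of the denominator of `r₂(λ,k)`: for every integer `k ≥ 3`, the
quartic `k²λ⁴ + 14k²λ³ + k(63k-8)λ² + 14k(7k-4)λ + 8(5k²-2k+8)` has no root with
`Re λ ≥ 0`. -/
theorem quartic_hurwitz_stable (k : ℕ) (hk : 3 ≤ k) :
    ∀ lam : ℂ, 0 ≤ lam.re →
      (k : ℂ) ^ 2 * lam ^ 4 + 14 * (k : ℂ) ^ 2 * lam ^ 3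
        + (k : ℂ) * (63 * (k : ℂ) - 8) * lam ^ 2
        + 14 * (k : ℂ) * (7 * (k : ℂ) - 4) * lam
        + 8 * (5 * (k : ℂ) ^ 2 - 2 * (k : ℂ) + 8) ≠ 0 := by
  intro lam hlam
  have hk1 : (1 : ℝ) ≤ k := by exact_mod_cast (by omega : 1 ≤ k)
  have hquad := quadratic_ne_zero_of_sq_mul_re_add_im_sq_nonneg hk1
    (Complex.sq_mul_re_add_im_sq_nonneg_of_re_nonneg (by norm_num : (0 : ℝ) ≤ 7) hlam)
  push_cast at hquad
  convert hquad using 1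
  ring
end
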